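/- Let D ≥ 1 and let M ⊆ ℝ^D be a Borel set whose closure cl(M) satisfies λ_D(cl(M)) = 0. Let ℙ† be a Borel probability measure on ℝ^D with ℙ†(M) = 1 and supp(ℙ†) = cl(M). Let (ℙ_t)_{t=1}^∞ be Borel probability measures on ℝ^D converging weakly to ℙ†, and suppose that for each t, ℙ_t admits a density p_t : ℝ^D → [0,∞) with respect to λ_D which is Lipschitz continuous with Lipschitz constant L_t ≥ 0. Then L_t → ∞ as t → ∞. (If a sequence of Lipschitz probability densities learns a distribution supported on a Lebesgue-null set, the Lipschitz constants must blow up.) -/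

import Mathlib

open MeasureTheory Filter Topology
open scoped ENNReal

/-- The support of a Borel probability measure: the intersection of all closed sets of
full measure. -/
def msupport {E : Type*} [TopologicalSpace E] [MeasurableSpace E]
    (μ : MeasureTheory.Measure E) : Set E :=
  ⋂₀ {C : Set E | IsClosed C ∧ μ C = 1}

/-!
A density of a probability measure that is `L`-Lipschitz is at least `p x - L` on the unit ball
around `x`, so it is bounded by `L + 1 / λ(B(0,1))`. Hence, along any subsequence with bounded
Lipschitz constants, the densities are uniformly bounded by some `B`, and the measures give mass at
most `B · λ(U)` to every open `U`. Choosing `U ⊇ M` open with `λ(U) < 1 / (2B)` (outer regularity;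
`M` is Lebesgue-null) and applying the portmanteau theorem gives `1 = ℙ†(U) ≤ liminf ℙ_t(U) ≤ 1/2`.
-/

open Metric

theorem le_add_inv_measure_ball_of_lintegral_le_one {E : Type*} [NormedAddCommGroup E]
    [ProperSpace E] [MeasurableSpace E] [BorelSpace E] (μ : Measure E) [μ.IsAddHaarMeasure]
    {f : E → ℝ} {L : ℝ} (hL : 0 ≤ L) (hf : ∀ x y, |f x - f y| ≤ L * ‖x - y‖)
    (hint : ∫⁻ x, ENNReal.ofReal (f x) ∂μ ≤ 1) (x : E) :
    f x ≤ L + (μ (ball 0 1)).toReal⁻¹ := by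
  set κ := (μ (ball 0 1)).toReal
  have hκ : 0 < κ := ENNReal.toReal_pos (measure_ball_pos μ 0 one_pos).ne' measure_ball_lt_top.ne
  have hmass : ENNReal.ofReal ((f x - L) * κ) ≤ 1 :=
    calc ENNReal.ofReal ((f x - L) * κ)
        = ENNReal.ofReal (f x - L) * μ (ball x 1) := by
          rw [ENNReal.ofReal_mul' hκ.le, Measure.addHaar_ball_center,
            ENNReal.ofReal_toReal measure_ball_lt_top.ne]
      _ = ∫⁻ _ in ball x 1, ENNReal.ofReal (f x - L) ∂μ := (setLIntegral_const _ _).symm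
      _ ≤ ∫⁻ y in ball x 1, ENNReal.ofReal (f y) ∂μ := by
          refine setLIntegral_mono' measurableSet_ball fun y hy => ENNReal.ofReal_le_ofReal ?_
          have hxy : ‖x - y‖ ≤ 1 := by
            rw [← dist_eq_norm, dist_comm]
            exact (mem_ball.1 hy).le
          linarith [(abs_le.1 (hf x y)).2, mul_le_of_le_one_right hL hxy]
      _ ≤ ∫⁻ y, ENNReal.ofReal (f y) ∂μ := setLIntegral_le_lintegral _ _
      _ ≤ 1 := hint
  have hbound : f x - L ≤ κ⁻¹ := by
    rw [inv_eq_one_div, le_div_iff₀ hκ]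
    exact ENNReal.ofReal_le_one.1 hmass
  linarith

theorem le_liminf_measure_open_of_forall_integral_tendsto {Ω ι : Type*} [MeasurableSpace Ω]
    [TopologicalSpace Ω] [OpensMeasurableSpace Ω] [HasOuterApproxClosed Ω] {l : Filter ι}
    {μs : ι → Measure Ω} [∀ i, IsProbabilityMeasure (μs i)] {μ : Measure Ω} [IsProbabilityMeasure μ]
    (h : ∀ f : BoundedContinuousFunction Ω ℝ,
      Tendsto (fun i => ∫ ω, f ω ∂μs i) l (𝓝 (∫ ω, f ω ∂μ)))
    {G : Set Ω} (hG : IsOpen G) :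
    μ G ≤ liminf (fun i => μs i G) l :=
  ProbabilityMeasure.le_liminf_measure_open_of_tendsto
    (μs := fun i => ⟨μs i, inferInstance⟩) (μ := ⟨μ, inferInstance⟩)
    (ProbabilityMeasure.tendsto_iff_forall_integral_tendsto.2 h) hG

theorem lipschitz_constants_blow_up_general
    {D : ℕ}
    (M : Set (EuclideanSpace ℝ (Fin D)))
    (hMnull : volume (closure M) = 0)
    (Pdag : Measure (EuclideanSpace ℝ (Fin D))) [IsProbabilityMeasure Pdag]
    (hPdagM : Pdag M = 1)
    (P : ℕ → Measure (EuclideanSpace ℝ (Fin D)))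
    (hPprob : ∀ t, IsProbabilityMeasure (P t))
    (p : ℕ → EuclideanSpace ℝ (Fin D) → ℝ)
    (hp_density : ∀ t, ∀ A : Set (EuclideanSpace ℝ (Fin D)), MeasurableSet A →
        P t A = ∫⁻ x in A, ENNReal.ofReal (p t x) ∂volume)
    (Lc : ℕ → ℝ)
    (hLip : ∀ t, ∀ x y : EuclideanSpace ℝ (Fin D), |p t x - p t y| ≤ Lc t * ‖x - y‖)
    (hweak : ∀ h : BoundedContinuousFunction (EuclideanSpace ℝ (Fin D)) ℝ,
        Tendsto (fun t => ∫ x, h x ∂(P t)) atTop (𝓝 (∫ x, h x ∂Pdag))) :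
    Tendsto Lc atTop atTop := by
  refine tendsto_atTop.2 fun L => ?_
  by_contra hL
  set B := max L 0 + (volume (ball (0 : EuclideanSpace ℝ (Fin D)) 1)).toReal⁻¹
  have hbound : ∀ t, Lc t ≤ L → ∀ x, p t x ≤ B := fun t ht =>
    le_add_inv_measure_ball_of_lintegral_le_one volume (le_max_right L 0)
      (fun x y => (hLip t x y).trans
        (mul_le_mul_of_nonneg_right (ht.trans (le_max_left L 0)) (norm_nonneg _)))
      (by rw [← setLIntegral_univ, ← hp_density t _ .univ, (hPprob t).measure_univ])
  obtain ⟨U, hMU, hU, hUvol⟩ :=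
    Set.exists_isOpen_lt_of_lt (μ := volume) M (2⁻¹ / ENNReal.ofReal B)
      ((measure_mono_null subset_closure hMnull).trans_lt
        (ENNReal.div_pos (by norm_num) ENNReal.ofReal_ne_top))
  have hsmall : ∀ t, Lc t ≤ L → P t U ≤ 2⁻¹ := fun t ht =>
    calc P t U = ∫⁻ x in U, ENNReal.ofReal (p t x) := hp_density t U hU.measurableSet
      _ ≤ ∫⁻ _ in U, ENNReal.ofReal B :=
          setLIntegral_mono' hU.measurableSet fun x _ => ENNReal.ofReal_le_ofReal (hbound t ht x)
      _ = ENNReal.ofReal B * volume U := setLIntegral_const _ _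
      _ ≤ 2⁻¹ := ENNReal.mul_le_of_le_div' hUvol.le
  have hPdagU : Pdag U ≤ 2⁻¹ :=
    (le_liminf_measure_open_of_forall_integral_tendsto hweak hU).trans
      (liminf_le_of_frequently_le'
        ((not_eventually.1 hL).mono fun t ht => hsmall t (not_le.1 ht).le))
  have hPdagU_one : Pdag U = 1 := le_antisymm prob_le_one (hPdagM ▸ measure_mono hMU)
  norm_num [hPdagU_one] at hPdagU

/-- If a sequence of probability measures with Lipschitz densities (with Lipschitz
constants `Lc t`) converges weakly to a distribution supported on a set whose closure is
Lebesgue-null, then the Lipschitz constants must blow up: `Lc t → ∞`. -/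
theorem lipschitz_constants_blow_up
    {D : ℕ} (hD : 1 ≤ D)
    (M : Set (EuclideanSpace ℝ (Fin D))) (hM : MeasurableSet M)
    (hMnull : volume (closure M) = 0)
    (Pdag : Measure (EuclideanSpace ℝ (Fin D))) [IsProbabilityMeasure Pdag]
    (hPdagM : Pdag M = 1)
    (hsupp : msupport Pdag = closure M)
    (P : ℕ → Measure (EuclideanSpace ℝ (Fin D)))
    (hPprob : ∀ t, IsProbabilityMeasure (P t))
    (p : ℕ → EuclideanSpace ℝ (Fin D) → ℝ)
    (hp_nonneg : ∀ t x, 0 ≤ p t x)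
    (hp_density : ∀ t, ∀ A : Set (EuclideanSpace ℝ (Fin D)), MeasurableSet A →
        P t A = ∫⁻ x in A, ENNReal.ofReal (p t x) ∂volume)
    (Lc : ℕ → ℝ)
    (hLc_nonneg : ∀ t, 0 ≤ Lc t)
    (hLip : ∀ t, ∀ x y : EuclideanSpace ℝ (Fin D), |p t x - p t y| ≤ Lc t * ‖x - y‖)
    (hweak : ∀ h : BoundedContinuousFunction (EuclideanSpace ℝ (Fin D)) ℝ,
        Tendsto (fun t => ∫ x, h x ∂(P t)) atTop (𝓝 (∫ x, h x ∂Pdag))) :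
    Tendsto Lc atTop atTop :=
  lipschitz_constants_blow_up_general M hMnull Pdag hPdagM P hPprob p hp_density Lc hLip hweak
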